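/- Caccioppoli-type bound (3.16) for A-harmonic functions: if ∫_Ω ⟨A(x) ∇u(x), ∇(η²·u)(x)⟩ dx = 0, if ⟨A(x)ξ, ξ⟩ ≤ β‖ξ‖² for a.e. x ∈ Ω and all ξ ∈ ℝ^d, and if ‖∇η(x)‖ ≤ L for all x ∈ Ω, then ∫_Ω ⟨A(x) ∇(η·u)(x), ∇(η·u)(x)⟩ dx ≤ β · L² · ∫_Ω u(x)² dx. -/

import Mathlib

open MeasureTheory
open scoped RealInnerProductSpace

/-!
For symmetric `A`, the product rule gives the pointwise identity
`⟨A ∇(ηu), ∇(ηu)⟩ = ⟨A ∇u, ∇(η²u)⟩ + ⟨A ∇η, ∇η⟩ u²`.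
Integrating over `Ω`, the first term vanishes by the `A`-harmonicity hypothesis, and the
second is at most `β L² u²` pointwise.
-/

section
variable {F : Type*} [NormedAddCommGroup F] [InnerProductSpace ℝ F]

theorem LinearMap.IsSymmetric.inner_map_smul_add_smul_self {T : F →ₗ[ℝ] F}
    (hT : T.IsSymmetric) (a b : ℝ) (p q : F) :
    ⟪T (a • p + b • q), a • p + b • q⟫ =
      ⟪T p, a ^ 2 • p + (2 * a * b) • q⟫ + ⟪T q, q⟫ * b ^ 2 := by
  have hpq : ⟪T q, p⟫ = ⟪T p, q⟫ := by rw [hT, real_inner_comm]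
  simp only [map_add, map_smul, inner_add_left, inner_add_right, real_inner_smul_left,
    real_inner_smul_right, hpq]
  ring

variable [CompleteSpace F] {f g : F → ℝ} {x : F}

theorem gradient_fun_mul (hf : DifferentiableAt ℝ f x) (hg : DifferentiableAt ℝ g x) :
    gradient (fun y => f y * g y) x = f x • gradient g x + g x • gradient f x := by
  simp only [gradient, fderiv_fun_mul hf hg, map_add, map_smul]

theorem gradient_fun_sq_mul (hf : DifferentiableAt ℝ f x) (hg : DifferentiableAt ℝ g x) :
    gradient (fun y => f y ^ 2 * g y) x =
      f x ^ 2 • gradient g x + (2 * f x * g x) • gradient f x := by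
  have hsq : (fun y => f y ^ 2 * g y) = fun y => f y * (f y * g y) := by
    funext y; ring
  rw [hsq, gradient_fun_mul (g := fun y => f y * g y) hf (hf.mul hg), gradient_fun_mul hf hg]
  module

theorem inner_map_gradient_mul_self {T : F →ₗ[ℝ] F} (hT : T.IsSymmetric)
    (hf : DifferentiableAt ℝ f x) (hg : DifferentiableAt ℝ g x) :
    ⟪T (gradient (fun y => f y * g y) x), gradient (fun y => f y * g y) x⟫ =
      ⟪T (gradient g x), gradient (fun y => f y ^ 2 * g y) x⟫ +
        ⟪T (gradient f x), gradient f x⟫ * g x ^ 2 := by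
  rw [gradient_fun_mul hf hg, gradient_fun_sq_mul hf hg, hT.inner_map_smul_add_smul_self]

end

theorem caccioppoli_bound_general
    (d : ℕ) (Ω : Set (EuclideanSpace ℝ (Fin d))) (hΩ : IsOpen Ω)
    (β L : ℝ) (hβ : 0 < β)
    (A : EuclideanSpace ℝ (Fin d) → (EuclideanSpace ℝ (Fin d) →L[ℝ] EuclideanSpace ℝ (Fin d)))
    (hA : ∀ᵐ x ∂(volume.restrict Ω), ∀ ξ ζ : EuclideanSpace ℝ (Fin d), ⟪A x ξ, ζ⟫ = ⟪ξ, A x ζ⟫)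
    (hAβ : ∀ᵐ x ∂(volume.restrict Ω), ∀ ξ : EuclideanSpace ℝ (Fin d), ⟪A x ξ, ξ⟫ ≤ β * ‖ξ‖ ^ 2)
    (u η : EuclideanSpace ℝ (Fin d) → ℝ)
    (hu : ∀ x ∈ Ω, DifferentiableAt ℝ u x)
    (hη : ∀ x ∈ Ω, DifferentiableAt ℝ η x)
    (hgrad : ∀ x ∈ Ω, ‖gradient η x‖ ≤ L)
    (hint2 : IntegrableOn (fun x =>
      ⟪A x (gradient η x), gradient η x⟫ * (u x) ^ 2) Ω)
    (hint3 : IntegrableOn (fun x =>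
      ⟪A x (gradient u x), gradient (fun y => (η y) ^ 2 * u y) x⟫) Ω)
    (hint4 : IntegrableOn (fun x => (u x) ^ 2) Ω)
    (horth : ∫ x in Ω, ⟪A x (gradient u x), gradient (fun y => (η y) ^ 2 * u y) x⟫ = 0) :
    ∫ x in Ω, ⟪A x (gradient (fun y => η y * u y) x), gradient (fun y => η y * u y) x⟫ ≤
      β * L ^ 2 * ∫ x in Ω, (u x) ^ 2 := by
  have hmem : ∀ᵐ x ∂(volume.restrict Ω), x ∈ Ω := ae_restrict_mem hΩ.measurableSet
  have hsplit : ∀ᵐ x ∂(volume.restrict Ω),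
      ⟪A x (gradient (fun y => η y * u y) x), gradient (fun y => η y * u y) x⟫ =
        ⟪A x (gradient u x), gradient (fun y => (η y) ^ 2 * u y) x⟫ +
          ⟪A x (gradient η x), gradient η x⟫ * (u x) ^ 2 := by
    filter_upwards [hmem, hA] with x hx hsym
    exact inner_map_gradient_mul_self (T := (A x).toLinearMap) hsym (hη x hx) (hu x hx)
  have hbound : ∀ᵐ x ∂(volume.restrict Ω),
      ⟪A x (gradient η x), gradient η x⟫ * (u x) ^ 2 ≤ β * L ^ 2 * (u x) ^ 2 := by
    filter_upwards [hmem, hAβ] with x hx hAx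
    have hnorm_sq : ‖gradient η x‖ ^ 2 ≤ L ^ 2 :=
      pow_le_pow_left₀ (norm_nonneg _) (hgrad x hx) 2
    gcongr
    exact (hAx _).trans (mul_le_mul_of_nonneg_left hnorm_sq hβ.le)
  calc ∫ x in Ω, ⟪A x (gradient (fun y => η y * u y) x), gradient (fun y => η y * u y) x⟫
      = (∫ x in Ω, ⟪A x (gradient u x), gradient (fun y => (η y) ^ 2 * u y) x⟫) +
          ∫ x in Ω, ⟪A x (gradient η x), gradient η x⟫ * (u x) ^ 2 := by
        rw [integral_congr_ae hsplit, integral_add hint3 hint2]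
    _ = ∫ x in Ω, ⟪A x (gradient η x), gradient η x⟫ * (u x) ^ 2 := by rw [horth, zero_add]
    _ ≤ ∫ x in Ω, β * L ^ 2 * (u x) ^ 2 := integral_mono_ae hint2 (hint4.const_mul _) hbound
    _ = β * L ^ 2 * ∫ x in Ω, (u x) ^ 2 := integral_const_mul _ _

/-- Caccioppoli-type bound (3.16) for `A`-harmonic functions: if
`∫_Ω ⟨A ∇u, ∇(η²u)⟩ = 0`, `⟨A(x)ξ, ξ⟩ ≤ β‖ξ‖²` for a.e. `x ∈ Ω` and all `ξ`, and
`‖∇η(x)‖ ≤ L` on `Ω`, then `∫_Ω ⟨A ∇(ηu), ∇(ηu)⟩ ≤ β L² ∫_Ω u²`. -/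
theorem caccioppoli_bound
    (d : ℕ) (Ω : Set (EuclideanSpace ℝ (Fin d))) (hΩ : IsOpen Ω)
    (β L : ℝ) (hβ : 0 < β) (hL : 0 < L)
    (A : EuclideanSpace ℝ (Fin d) → (EuclideanSpace ℝ (Fin d) →L[ℝ] EuclideanSpace ℝ (Fin d)))
    (hA : ∀ᵐ x ∂(volume.restrict Ω), ∀ ξ ζ : EuclideanSpace ℝ (Fin d), ⟪A x ξ, ζ⟫ = ⟪ξ, A x ζ⟫)
    (hAβ : ∀ᵐ x ∂(volume.restrict Ω), ∀ ξ : EuclideanSpace ℝ (Fin d), ⟪A x ξ, ξ⟫ ≤ β * ‖ξ‖ ^ 2)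
    (u η : EuclideanSpace ℝ (Fin d) → ℝ)
    (hu : ∀ x ∈ Ω, DifferentiableAt ℝ u x)
    (hη : ∀ x ∈ Ω, DifferentiableAt ℝ η x)
    (hgrad : ∀ x ∈ Ω, ‖gradient η x‖ ≤ L)
    (hint1 : IntegrableOn (fun x =>
      ⟪A x (gradient (fun y => η y * u y) x), gradient (fun y => η y * u y) x⟫) Ω)
    (hint2 : IntegrableOn (fun x =>
      ⟪A x (gradient η x), gradient η x⟫ * (u x) ^ 2) Ω)
    (hint3 : IntegrableOn (fun x =>
      ⟪A x (gradient u x), gradient (fun y => (η y) ^ 2 * u y) x⟫) Ω)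
    (hint4 : IntegrableOn (fun x => (u x) ^ 2) Ω)
    (horth : ∫ x in Ω, ⟪A x (gradient u x), gradient (fun y => (η y) ^ 2 * u y) x⟫ = 0) :
    ∫ x in Ω, ⟪A x (gradient (fun y => η y * u y) x), gradient (fun y => η y * u y) x⟫ ≤
      β * L ^ 2 * ∫ x in Ω, (u x) ^ 2 :=
  caccioppoli_bound_general d Ω hΩ β L hβ A hA hAβ u η hu hη hgrad hint2 hint3 hint4 horth
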